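/- arXiv:2201.04894 — 4 statements merged into one kernel-verified Lean document; each statement's English description precedes it below -/
import Mathlib

section
/- In any category with pushouts and tensors by the simplicial interval Δ[1] (or more generally in any simplicially enriched category admitting such tensors), inclusions of deformation retracts are stable under pushout: if i : C → D is an inclusion of a deformation retract and C → C' is any morphism, then the pushout i' : C' → D ∪_C C' is again an inclusion of a deformation retract. -/
open CategoryTheory CategoryTheory.Limits

/-- An abstract cylinder (tensor with the simplicial interval `Δ[1]`): a functor `T`
with two endpoint inclusions `δ₀, δ₁ : 𝟭 ⟶ T` and a projection `p : T ⟶ 𝟭`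
retracting them. -/
structure Cylinder (C : Type*) [Category C] where
  T : C ⥤ C
  δ₀ : 𝟭 C ⟶ T
  δ₁ : 𝟭 C ⟶ T
  p : T ⟶ 𝟭 C
  retr₀ : ∀ X : C, δ₀.app X ≫ p.app X = 𝟙 X
  retr₁ : ∀ X : C, δ₁.app X ≫ p.app X = 𝟙 X

/-- `i : X ⟶ Y` is an inclusion of a deformation retract: there is `r : Y ⟶ X` with
`i ≫ r = 𝟙` and a homotopy `H : Y ⊗ Δ[1] ⟶ Y` from `𝟙 Y` to `r ≫ i` which is constant
on `X`. -/
def IsDefRetractIncl {C : Type*} [Category C] (cyl : Cylinder C) {X Y : C} (i : X ⟶ Y) : Prop :=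
  ∃ (r : Y ⟶ X) (H : cyl.T.obj Y ⟶ Y),
    i ≫ r = 𝟙 X ∧
    cyl.δ₀.app Y ≫ H = 𝟙 Y ∧
    cyl.δ₁.app Y ≫ H = r ≫ i ∧
    cyl.T.map i ≫ H = cyl.p.app X ≫ i

/-! On `P = Y ⊔_X X'` the retraction is `(r ≫ f, 𝟙 X')`, and the homotopy is glued from
`H ≫ inl` on `T Y` and the constant homotopy `p ≫ inr` on `T X'`: since `T` preserves pushouts,
`T P` is the pushout of `T Y ← T X → T X'`, and the two pieces agree on `T X` because `H` is
constant on `X`. -/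

namespace CategoryTheory.Functor

variable {C D : Type*} [Category C] [Category D] {X Y X' : C} {i : X ⟶ Y} {f : X ⟶ X'}
  [HasPushout i f]

section

variable (i f) in
noncomputable def pushoutMapDesc (F : C ⥤ D) [PreservesColimit (span i f) F] {Z : D}
    (a : F.obj Y ⟶ Z) (b : F.obj X' ⟶ Z) (w : F.map i ≫ a = F.map f ≫ b) :
    F.obj (pushout i f) ⟶ Z :=
  PushoutCocone.IsColimit.desc (isColimitOfHasPushoutOfPreservesColimit F i f) a b w

variable {F : C ⥤ D} [PreservesColimit (span i f) F] {Z : D} {a : F.obj Y ⟶ Z}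
  {b : F.obj X' ⟶ Z} {w : F.map i ≫ a = F.map f ≫ b}

@[simp]
lemma map_inl_pushoutMapDesc : F.map (pushout.inl i f) ≫ F.pushoutMapDesc i f a b w = a :=
  PushoutCocone.IsColimit.inl_desc (isColimitOfHasPushoutOfPreservesColimit F i f) a b w

@[simp]
lemma map_inr_pushoutMapDesc : F.map (pushout.inr i f) ≫ F.pushoutMapDesc i f a b w = b :=
  PushoutCocone.IsColimit.inr_desc (isColimitOfHasPushoutOfPreservesColimit F i f) a b w

end

variable {F : C ⥤ C} [PreservesColimit (span i f) F] {Z : C} {a : F.obj Y ⟶ Z}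
  {b : F.obj X' ⟶ Z} {w : F.map i ≫ a = F.map f ≫ b}

@[simp]
lemma inl_app_pushoutMapDesc (α : 𝟭 C ⟶ F) :
    pushout.inl i f ≫ α.app (pushout i f) ≫ F.pushoutMapDesc i f a b w = α.app Y ≫ a := by
  simp [reassoc_of% α.naturality]

@[simp]
lemma inr_app_pushoutMapDesc (α : 𝟭 C ⟶ F) :
    pushout.inr i f ≫ α.app (pushout i f) ≫ F.pushoutMapDesc i f a b w = α.app X' ≫ b := by
  simp [reassoc_of% α.naturality]

end CategoryTheory.Functor

/-- Inclusions of deformation retracts are stable under pushout. -/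
theorem isDefRetractIncl_pushout {C : Type*} [Category C] [HasPushouts C]
    (cyl : Cylinder C) [PreservesColimitsOfShape WalkingSpan cyl.T]
    {X Y X' : C} (i : X ⟶ Y) (f : X ⟶ X') (h : IsDefRetractIncl cyl i) :
    IsDefRetractIncl cyl (pushout.inr i f) := by
  obtain ⟨r, H, hir, hH₀, hH₁, hHi⟩ := h
  have hH : cyl.T.map i ≫ H ≫ pushout.inl i f =
      cyl.T.map f ≫ cyl.p.app X' ≫ pushout.inr i f := by
    simp [reassoc_of% hHi, pushout.condition, reassoc_of% cyl.p.naturality]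
  refine ⟨pushout.desc (r ≫ f) (𝟙 X') (by simp [reassoc_of% hir]),
    cyl.T.pushoutMapDesc i f _ _ hH, pushout.inr_desc _ _ _, ?_, ?_, by simp⟩
  · refine pushout.hom_ext ?_ ?_ <;> simp [reassoc_of% hH₀, reassoc_of% cyl.retr₀]
  · refine pushout.hom_ext ?_ ?_ <;>
      simp [reassoc_of% hH₁, reassoc_of% cyl.retr₁, pushout.condition,
        pushout.inl_desc_assoc, pushout.inr_desc_assoc]
end

section
/- The pushout product of the boundary inclusions ∂Δ[k] → Δ[k] and ∂Δ[k'] → Δ[k'] in simplicial sets is (up to isomorphism) the inclusion of the subcomplex (Δ[k] × ∂Δ[k']) ∪_{∂Δ[k] × ∂Δ[k']} (∂Δ[k] × Δ[k']) into Δ[k] × Δ[k'], and this map is a monomorphism of simplicial sets. -/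
open CategoryTheory CategoryTheory.Limits CategoryTheory.GrothendieckTopology Simplicial SSet

universe u

/-- The union of two subpresheaves. -/
def subpresheafUnion {C : Type u} [Category C] {F : Cᵒᵖ ⥤ Type u} (G H : Subfunctor F) :
    Subfunctor F where
  obj U := G.obj U ∪ H.obj U
  map := by
    intro U V i x hx
    cases hx with
    | inl hx => exact Or.inl (G.map i hx)
    | inr hx => exact Or.inr (H.map i hx)

/-!
`SSet` is a presheaf category, hence adhesive. The square formed by `∂Δ[k] × ∂Δ[k']`,
`Δ[k] × ∂Δ[k']`, `∂Δ[k] × Δ[k']` and `Δ[k] × Δ[k']` is a pullback of monomorphisms (like any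
square of maps `i × 𝟙` and `𝟙 × j`), and in an adhesive category the map from the pushout of a
pullback of two monomorphisms to their common target is again a monomorphism (Lack–Sobociński).
Its image is the union of the two images because pushouts of presheaves are computed objectwise,
where the two coprojections are jointly surjective.
-/

lemma IsPullback.of_prod_map_id {C : Type*} [Category C] [HasBinaryProducts C] {A X B Y : C}
    (i : A ⟶ X) (j : B ⟶ Y) :
    IsPullback (prod.map i (𝟙 B)) (prod.map (𝟙 A) j) (prod.map (𝟙 X) j) (prod.map i (𝟙 Y)) :=
  IsPullback.mk' (by simp) (fun _ φ φ' h₁ h₂ => by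
      ext
      · simpa using congrArg (· ≫ prod.fst) h₂
      · simpa using congrArg (· ≫ prod.snd) h₁)
    (fun _ a b w => ⟨prod.lift (b ≫ prod.fst) (a ≫ prod.snd), by
      ext
      · simpa [prod.lift_fst] using (congrArg (· ≫ prod.fst) w).symm
      · simp [prod.lift_snd], by
      ext
      · simp [prod.lift_fst]
      · simpa [prod.lift_snd] using congrArg (· ≫ prod.snd) w⟩)

lemma Adhesive.mono_pushout_desc_of_isPullback {C : Type*} [Category C] [Adhesive C]
    {W X Y Z : C} {f : W ⟶ X} {g : W ⟶ Y} {a : X ⟶ Z} {b : Y ⟶ Z} [HasPushout f g]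
    [Mono a] [Mono b] (H : IsPullback f g a b) : Mono (pushout.desc a b H.w) := by
  have : pushout.desc a b H.w = pushout.map f g (pullback.fst a b) (pullback.snd a b)
      (𝟙 _) (𝟙 _) H.isoPullback.hom (by simp) (by simp) ≫
      pushout.desc a b pullback.condition := by
    ext <;> simp [pushout.inl_desc, pushout.inr_desc, pushout.inl_desc_assoc,
      pushout.inr_desc_assoc]
  rw [this]
  infer_instance

lemma Subfunctor.range_pushout_desc {C : Type*} [Category C] {A B D Z : Cᵒᵖ ⥤ Type u}
    (f : A ⟶ B) (g : A ⟶ D) [HasPushout f g] (a : B ⟶ Z) (b : D ⟶ Z) (w : f ≫ a = g ≫ b) :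
    Subfunctor.range (pushout.desc a b w) = Subfunctor.range a ⊔ Subfunctor.range b := by
  refine le_antisymm ?_ (sup_le ?_ ?_)
  · rintro U _ ⟨x, rfl⟩
    rcases Types.eq_or_eq_of_isPushout
      ((IsPushout.of_hasPushout f g).map ((evaluation _ _).obj U)) x with ⟨y, rfl⟩ | ⟨y, rfl⟩
    · exact Or.inl ⟨y, (types_congr_hom (congr_app (pushout.inl_desc a b w) U) y).symm⟩
    · exact Or.inr ⟨y, (types_congr_hom (congr_app (pushout.inr_desc a b w) U) y).symm⟩
  · simpa [pushout.inl_desc] using Subfunctor.range_comp_le (pushout.inl f g) (pushout.desc a b w)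
  · simpa [pushout.inr_desc] using Subfunctor.range_comp_le (pushout.inr f g) (pushout.desc a b w)

/-- The pushout product of the boundary inclusions `∂Δ[k] → Δ[k]` and `∂Δ[k'] → Δ[k']`:
it is a monomorphism, and identifies the pushout with the subcomplex
`(Δ[k] × ∂Δ[k']) ∪_{∂Δ[k] × ∂Δ[k']} (∂Δ[k] × Δ[k'])` of `Δ[k] × Δ[k']`, i.e. its image is
the union of the images of `Δ[k] × ∂Δ[k']` and `∂Δ[k] × Δ[k']`. -/
theorem boundary_pushoutProduct (k k' : ℕ) :
    Mono (pushout.desc (f := prod.map ((∂Δ[k]).ι) (𝟙 (∂Δ[k'] : SSet)))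
        (g := prod.map (𝟙 (∂Δ[k] : SSet)) ((∂Δ[k']).ι))
        (prod.map (𝟙 Δ[k]) ((∂Δ[k']).ι))
        (prod.map ((∂Δ[k]).ι) (𝟙 Δ[k']))
        (by rw [prod.map_map, prod.map_map]; simp)) ∧
    Subfunctor.range (pushout.desc (f := prod.map ((∂Δ[k]).ι) (𝟙 (∂Δ[k'] : SSet)))
        (g := prod.map (𝟙 (∂Δ[k] : SSet)) ((∂Δ[k']).ι))
        (prod.map (𝟙 Δ[k]) ((∂Δ[k']).ι))
        (prod.map ((∂Δ[k]).ι) (𝟙 Δ[k']))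
        (by rw [prod.map_map, prod.map_map]; simp)) =
      subpresheafUnion (Subfunctor.range (prod.map (𝟙 Δ[k]) ((∂Δ[k']).ι)))
        (Subfunctor.range (prod.map ((∂Δ[k]).ι) (𝟙 Δ[k']))) :=
  ⟨Adhesive.mono_pushout_desc_of_isPullback (IsPullback.of_prod_map_id _ _),
    -- `subpresheafUnion G H` is definitionally `G ⊔ H`
    Subfunctor.range_pushout_desc _ _ _ _ _⟩
end

section
/- If F : C → D is a functor between small finitely cocomplete categories preserving finite colimits, then the induced functor Ind(F) : Ind(C) → Ind(D), obtained by extending F to preserve filtered colimits, admits a right adjoint. -/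
/-!
Inside presheaves, `Ind C` is the full subcategory of left exact presheaves. Since `F` is right
exact, restriction along `F.op` preserves left exactness, so the adjunction
`F.op.lan ⊣ (F.op ⋙ -)` on presheaves restricts to the ind-categories as soon as
`Ind.inclusion C ⋙ F.op.lan ≅ G ⋙ Ind.inclusion D`. The comparison map between these functors is
adjoint to the map sending `Ind.yoneda c ⟶ X` to its image under `G`. Both functors preserve
filtered colimits and every ind-object is a filtered colimit of representables, so it suffices to
check the comparison on `Ind.yoneda c`, where both sides are the left Kan extension
`yoneda (F c)` of `yoneda c` along `F.op`.
-/

open CategoryTheory CategoryTheory.Limits Opposite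

universe u

namespace CategoryTheory

section

variable {C : Type u} [SmallCategory C]

noncomputable def Ind.yonedaHomEquiv (c : C) (X : Ind C) :
    (Ind.yoneda.obj c ⟶ X) ≃ ((Ind.inclusion C).obj X).obj (op c) :=
  Ind.inclusion.fullyFaithful.homEquiv.trans
    ((Iso.homCongr (Ind.yonedaCompInclusion.app c) (Iso.refl _)).trans yonedaEquiv)

lemma Ind.yonedaHomEquiv_apply (c : C) (X : Ind C) (f : Ind.yoneda.obj c ⟶ X) :
    Ind.yonedaHomEquiv c X f =
      yonedaEquiv (Ind.yonedaCompInclusion.inv.app c ≫ (Ind.inclusion C).map f) := by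
  simp [Ind.yonedaHomEquiv, Functor.FullyFaithful.homEquiv, Iso.homCongr]

lemma Ind.yonedaHomEquiv_comp (c : C) {X X' : Ind C} (f : Ind.yoneda.obj c ⟶ X) (g : X ⟶ X') :
    Ind.yonedaHomEquiv c X' (f ≫ g) =
      ((Ind.inclusion C).map g).app (op c) (Ind.yonedaHomEquiv c X f) := by
  rw [Ind.yonedaHomEquiv_apply, Ind.yonedaHomEquiv_apply, Functor.map_comp, ← Category.assoc,
    yonedaEquiv_comp]

lemma Ind.yonedaHomEquiv_naturality {c c' : C} (γ : c' ⟶ c) {X : Ind C}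
    (f : Ind.yoneda.obj c ⟶ X) :
    ((Ind.inclusion C).obj X).map γ.op (Ind.yonedaHomEquiv c X f) =
      Ind.yonedaHomEquiv c' X (Ind.yoneda.map γ ≫ f) := by
  rw [Ind.yonedaHomEquiv_apply, Ind.yonedaHomEquiv_apply, Functor.map_comp,
    yonedaEquiv_naturality]
  exact congrArg yonedaEquiv (Ind.yonedaCompInclusion.inv.naturality_assoc γ _)

lemma Ind.yonedaHomEquiv_yoneda_map {c c' : C} (ψ : c ⟶ c') :
    Ind.yonedaHomEquiv c (Ind.yoneda.obj c') (Ind.yoneda.map ψ) =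
      (Ind.yonedaCompInclusion.inv.app c').app (op c) ψ := by
  rw [Ind.yonedaHomEquiv_apply, ← Functor.comp_map, ← Ind.yonedaCompInclusion.inv.naturality,
    yonedaEquiv_comp, yonedaEquiv_yoneda_map]

instance : PreservesFilteredColimits (Ind.inclusion C) :=
  ⟨fun _ _ _ => inferInstance⟩

lemma Ind.isIso_of_isIso_app_yoneda {E : Type*} [Category.{u} E] {A B : Ind C ⥤ E}
    [PreservesFilteredColimits A] [PreservesFilteredColimits B] (θ : A ⟶ B)
    (hθ : ∀ c, IsIso (θ.app (Ind.yoneda.obj c))) : IsIso θ := by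
  have (X : Ind C) : IsIso (θ.app X) := by
    rw [← NatTrans.isIso_app_iff_of_iso θ (Ind.colimitPresentationCompYoneda X)]
    have : IsIso (Functor.whiskerLeft (X.presentation.F ⋙ Ind.yoneda) θ) :=
      @NatIso.isIso_of_isIso_app _ _ _ _ _ _ _ fun j => hθ (X.presentation.F.obj j)
    exact isIso_app_coconePt_of_preservesColimit _ θ _ (colimit.isColimit _)
  exact NatIso.isIso_of_isIso_app θ

end

section

variable {C D : Type u} [SmallCategory C] [SmallCategory D]
  [HasFiniteColimits C] [HasFiniteColimits D] (F : C ⥤ D) [PreservesFiniteColimits F]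

lemma isIndObject_op_comp {P : Dᵒᵖ ⥤ Type u} (hP : IsIndObject P) :
    IsIndObject (F.op ⋙ P) := by
  have := (isIndObject_iff_preservesFiniteLimits P).1 hP
  have := preservesFiniteLimits_op F
  exact (isIndObject_iff_preservesFiniteLimits _).2 (comp_preservesFiniteLimits _ _)

noncomputable def Ind.restriction : Ind D ⥤ Ind C :=
  ObjectProperty.lift _ (Ind.inclusion D ⋙ (Functor.whiskeringLeft _ _ _).obj F.op)
    (fun Y => isIndObject_op_comp F Y.isIndObject_inclusion_obj) ⋙ (Ind.equivalence C).inverse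

noncomputable def Ind.restrictionCompInclusionIso :
    Ind.restriction F ⋙ Ind.inclusion C ≅
      Ind.inclusion D ⋙ (Functor.whiskeringLeft _ _ _).obj F.op :=
  Functor.isoWhiskerLeft _ (Functor.isoWhiskerRight (Ind.equivalence C).counitIso _)

end

section

variable {C D : Type u} [SmallCategory C] [SmallCategory D] {F : C ⥤ D} {G : Ind C ⥤ Ind D}
  (h : Ind.yoneda ⋙ G ≅ F ⋙ Ind.yoneda)

noncomputable def Ind.extensionUnitApp (X : Ind C) :
    (Ind.inclusion C).obj X ⟶ F.op ⋙ (Ind.inclusion D).obj (G.obj X) where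
  app c := TypeCat.ofHom fun x => Ind.yonedaHomEquiv (F.obj c.unop) (G.obj X)
    (h.inv.app c.unop ≫ G.map ((Ind.yonedaHomEquiv c.unop X).symm x))
  naturality c c' γ := by
    ext x
    obtain ⟨f, rfl⟩ := (Ind.yonedaHomEquiv c.unop X).surjective x
    obtain ⟨γ, rfl⟩ : ∃ γ' : c'.unop ⟶ c.unop, γ = γ'.op := ⟨γ.unop, rfl⟩
    dsimp
    rw [Ind.yonedaHomEquiv_naturality, Equiv.symm_apply_apply, Equiv.symm_apply_apply,
      Ind.yonedaHomEquiv_naturality, G.map_comp]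
    exact congrArg _ (h.inv.naturality_assoc γ _).symm

lemma Ind.extensionUnitApp_app_yonedaHomEquiv {X : Ind C} (c : C) (f : Ind.yoneda.obj c ⟶ X) :
    (Ind.extensionUnitApp h X).app (op c) (Ind.yonedaHomEquiv c X f) =
      Ind.yonedaHomEquiv (F.obj c) (G.obj X) (h.inv.app c ≫ G.map f) := by
  simp [Ind.extensionUnitApp]

noncomputable def Ind.extensionUnit :
    Ind.inclusion C ⟶ G ⋙ Ind.inclusion D ⋙ (Functor.whiskeringLeft _ _ _).obj F.op where
  app := Ind.extensionUnitApp h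
  naturality X Y g := by
    ext c x
    obtain ⟨f, rfl⟩ := (Ind.yonedaHomEquiv c.unop X).surjective x
    dsimp
    rw [← Ind.yonedaHomEquiv_comp, Ind.extensionUnitApp_app_yonedaHomEquiv,
      Ind.extensionUnitApp_app_yonedaHomEquiv, ← Ind.yonedaHomEquiv_comp, G.map_comp,
      Category.assoc]

noncomputable def Ind.lanComparison : Ind.inclusion C ⋙ F.op.lan ⟶ G ⋙ Ind.inclusion D :=
  (((F.op.lanAdjunction (Type u)).whiskerRight (Ind C)).homEquiv _ _).symm (Ind.extensionUnit h)

lemma Ind.lanComparison_app (X : Ind C) :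
    (Ind.lanComparison h).app X =
      ((F.op.lanAdjunction (Type u)).homEquiv _ _).symm (Ind.extensionUnitApp h X) := by
  simp only [Ind.lanComparison, Adjunction.homEquiv_counit]
  simp [Ind.extensionUnit]

lemma Ind.isIso_lanComparison_app_yoneda (c : C) :
    IsIso ((Ind.lanComparison h).app (Ind.yoneda.obj c)) := by
  rw [Ind.lanComparison_app]
  refine (F.op.isIso_lanAdjunction_homEquiv_symm_iff _).2 ?_
  refine (Functor.isLeftKanExtension_iff_of_iso₂ (yonedaMap F c) _
    (Ind.yonedaCompInclusion.app c).symm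
    ((Ind.yonedaCompInclusion.app (F.obj c)).symm ≪≫ (Ind.inclusion D).mapIso (h.app c).symm)
    ?_).1 inferInstance
  ext ⟨c'⟩ (ψ : c' ⟶ c)
  dsimp
  rw [← Ind.yonedaHomEquiv_yoneda_map, ← Ind.yonedaHomEquiv_yoneda_map,
    Ind.extensionUnitApp_app_yonedaHomEquiv, ← Ind.yonedaHomEquiv_comp]
  exact congrArg _ (h.inv.naturality ψ)

end

end CategoryTheory

/-- If `F : C ⥤ D` preserves finite colimits between small finitely cocomplete categories,
then any filtered-colimit-preserving extension `G : Ind C ⥤ Ind D` of `F` (i.e. satisfying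
`Ind.yoneda ⋙ G ≅ F ⋙ Ind.yoneda`) admits a right adjoint. -/
theorem ind_extension_isLeftAdjoint {C D : Type u} [SmallCategory C] [SmallCategory D]
    [HasFiniteColimits C] [HasFiniteColimits D]
    (F : C ⥤ D) [PreservesFiniteColimits F]
    (G : Ind C ⥤ Ind D) [PreservesFilteredColimits G]
    (h : Ind.yoneda ⋙ G ≅ F ⋙ Ind.yoneda) : G.IsLeftAdjoint := by
  have : PreservesColimits F.op.lan := (F.op.lanAdjunction (Type u)).leftAdjoint_preservesColimits
  have : IsIso (Ind.lanComparison h) :=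
    Ind.isIso_of_isIso_app_yoneda _ (Ind.isIso_lanComparison_app_yoneda h)
  exact ⟨Ind.restriction F, ⟨(F.op.lanAdjunction (Type u)).restrictFullyFaithful
    Ind.inclusion.fullyFaithful Ind.inclusion.fullyFaithful (asIso (Ind.lanComparison h))
    (Ind.restrictionCompInclusionIso F).symm⟩⟩
end

section
/- In a model category in which every object is fibrant, a cofibration i : X → Y is a trivial cofibration if it has the left lifting property with respect to all fibrations between fibrant objects. -/
open CategoryTheory CategoryTheory.Limits

/-- `f` is a retract of `g` in the arrow category. -/
def IsRetractOf {C : Type*} [Category C] {X Y X' Y' : C} (f : X ⟶ Y) (g : X' ⟶ Y') : Prop :=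
  ∃ (s : Arrow.mk f ⟶ Arrow.mk g) (t : Arrow.mk g ⟶ Arrow.mk f), s ≫ t = 𝟙 (Arrow.mk f)

/-- A model structure on a category: weak equivalences, cofibrations and fibrations,
satisfying two-out-of-three, closure under retracts, lifting and factorization axioms,
together with the (standard, derivable) characterizations of (trivial) cofibrations and
(trivial) fibrations via lifting properties. -/
structure ModelStructure (C : Type*) [Category C] where
  W : MorphismProperty C
  Cof : MorphismProperty C
  Fib : MorphismProperty C
  /-- two out of three -/
  w_comp : ∀ {X Y Z : C} (f : X ⟶ Y) (g : Y ⟶ Z), W f → W g → W (f ≫ g)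
  w_cancel_left : ∀ {X Y Z : C} (f : X ⟶ Y) (g : Y ⟶ Z), W f → W (f ≫ g) → W g
  w_cancel_right : ∀ {X Y Z : C} (f : X ⟶ Y) (g : Y ⟶ Z), W g → W (f ≫ g) → W f
  /-- closure under retracts -/
  w_retract : ∀ {X Y X' Y' : C} {f : X ⟶ Y} {g : X' ⟶ Y'}, IsRetractOf f g → W g → W f
  cof_retract : ∀ {X Y X' Y' : C} {f : X ⟶ Y} {g : X' ⟶ Y'}, IsRetractOf f g → Cof g → Cof f
  fib_retract : ∀ {X Y X' Y' : C} {f : X ⟶ Y} {g : X' ⟶ Y'}, IsRetractOf f g → Fib g → Fib f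
  /-- cofibrations are exactly the maps with the left lifting property with respect to
  trivial fibrations -/
  cof_iff : ∀ {A B : C} (i : A ⟶ B),
    Cof i ↔ ∀ {X Y : C} (p : X ⟶ Y), Fib p → W p → HasLiftingProperty i p
  /-- fibrations are exactly the maps with the right lifting property with respect to
  trivial cofibrations -/
  fib_iff : ∀ {X Y : C} (p : X ⟶ Y),
    Fib p ↔ ∀ {A B : C} (i : A ⟶ B), Cof i → W i → HasLiftingProperty i p
  /-- factorization into a cofibration followed by a trivial fibration -/
  fact₁ : ∀ {X Y : C} (f : X ⟶ Y), ∃ (Z : C) (i : X ⟶ Z) (p : Z ⟶ Y),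
    Cof i ∧ Fib p ∧ W p ∧ i ≫ p = f
  /-- factorization into a trivial cofibration followed by a fibration -/
  fact₂ : ∀ {X Y : C} (f : X ⟶ Y), ∃ (Z : C) (i : X ⟶ Z) (p : Z ⟶ Y),
    Cof i ∧ W i ∧ Fib p ∧ i ≫ p = f

/-- In a model category in which every object is fibrant, a cofibration having the left
lifting property with respect to all fibrations between fibrant objects is a trivial
cofibration (i.e. also a weak equivalence). -/
theorem cof_llp_fibrations_is_trivial {C : Type*} [Category C] [HasTerminal C]
    (M : ModelStructure C)
    (allFibrant : ∀ X : C, M.Fib (terminal.from X))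
    {X Y : C} (i : X ⟶ Y) (hi : M.Cof i)
    (h : ∀ {A B : C} (p : A ⟶ B), M.Fib p → M.Fib (terminal.from A) →
      M.Fib (terminal.from B) → HasLiftingProperty i p) :
    M.W i := by
  obtain ⟨Z, j, p, hj, hwj, hp, hfact⟩ := M.fact₂ i
  have hlift : HasLiftingProperty i p := h p hp (allFibrant Z) (allFibrant Y)
  have sq : CommSq j i p (𝟙 Y) := ⟨by simp [hfact]⟩
  haveI := hlift
  obtain ⟨⟨l, hl₁, hl₂⟩⟩ := (hlift.sq_hasLift sq).exists_lift
  have hretract : IsRetractOf i j := by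
    refine ⟨Arrow.homMk (u := 𝟙 X) (v := l) ?_, Arrow.homMk (u := 𝟙 X) (v := p) ?_, ?_⟩
    · simpa using hl₁.symm
    · simpa using hfact.symm
    · ext
      · simp
      · simpa using hl₂
  exact M.w_retract hretract hwj
end
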